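/- Lemma 3.1 part 4: For every integer m ≥ 1, ‖Ψ^{(m)}(1)‖₂ ≤ 2·(2c)^{m−1}·b. -/

import Mathlib

/-
Expanding the binomials, `Ψ^{(m)}(1) = Σ_{i,j} (f i + f j)^m C_{ij} C_{ij}*` with
`C_{ij} = σ^{-1/2} V_i σ^{1/2} V_j*`, the Kraus operators of `Φ† ∘ Φ`; invariance of `σ` makes
`Σ C_{ij} C_{ij}* = 1`. The KMS Gram matrix of the positive matrices `C_p C_p*` has nonnegative
entries, and its row sums are `tr(σ^{1/2} C_p C_p* σ^{1/2}) = ‖V_i σ^{1/2} V_j*‖²_HS`. A Schur test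
therefore bounds `‖Σ_p g_p C_p C_p*‖₂²` by `Σ_p w_p² · (row sum)` whenever `|g_p| ≤ w_p`. Taking
`w = (2c)^{m-1} |f i + f j|` and using `(f i + f j)² ≤ 2 f i² + 2 f j²`, summing the row sums over
one index gives `π`, whence the bound `4 (2c)^{2(m-1)} b²`.
-/

open Matrix MeasureTheory Finset
open scoped ComplexOrder
noncomputable section

/-- The algebra `M_d(ℂ)` of `d × d` complex matrices. -/
abbrev Md (d : ℕ) := Matrix (Fin d) (Fin d) ℂ

/-- KMS inner product `⟨x,y⟩ = tr(s x* s y)` where `s = σ^{1/2}`. -/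
def kmsInner {d : ℕ} (s x y : Md d) : ℂ := (s * xᴴ * s * y).trace

/-- KMS norm `‖x‖₂ = tr(s x* s x)^{1/2}` where `s = σ^{1/2}`. -/
def kmsNorm {d : ℕ} (s x : Md d) : ℝ := Real.sqrt ((s * xᴴ * s * x).trace.re)

/-- Operator norm of a map on `M_d(ℂ)` induced by the KMS norm. -/
def kmsOpNorm {d : ℕ} (s : Md d) (η : Md d → Md d) : ℝ :=
  sInf {C : ℝ | 0 ≤ C ∧ ∀ x, kmsNorm s (η x) ≤ C * kmsNorm s x}

/-- Spectral (operator) norm of a matrix, i.e. the operator norm of the induced map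
on Euclidean space. -/
def specNorm {d : ℕ} (x : Md d) : ℝ :=
  ‖(LinearMap.toContinuousLinearMap (Matrix.toEuclideanLin x))‖

/-- The positive square root `σ^{1/2}` of a positive definite state. -/
def sqrtm {d : ℕ} (σ : Md d) (hσ : σ.PosDef) : Md d := (hσ.posSemidef.1.eigenvectorUnitary : Md d) *
    diagonal ((↑) ∘ Real.sqrt ∘ hσ.posSemidef.1.eigenvalues) *
    (star (hσ.posSemidef.1.eigenvectorUnitary : Md d))

/-- The quantum channel (Heisenberg picture) `Φ(x) = Σ_i V_i* x V_i`. -/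
def channel {d : ℕ} {I : Type*} [Fintype I] (V : I → Md d) (x : Md d) : Md d :=
  ∑ i, (V i)ᴴ * x * V i

/-- The dual (Schrödinger picture) channel `Φ*(ρ) = Σ_i V_i ρ V_i*`. -/
def channelDual {d : ℕ} {I : Type*} [Fintype I] (V : I → Md d) (ρ : Md d) : Md d :=
  ∑ i, V i * ρ * (V i)ᴴ

/-- The KMS adjoint `Φ† = Γ_σ^{-1/2} ∘ Φ* ∘ Γ_σ^{1/2}` of the channel with Kraus
operators `V`, where `s = σ^{1/2}`. -/
def channelKMSAdj {d : ℕ} {I : Type*} [Fintype I] (V : I → Md d) (s : Md d) (x : Md d) : Md d :=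
  s⁻¹ * channelDual V (s * x * s) * s⁻¹

/-- Irreducibility of a completely positive map given by Kraus operators `W`:
for every nonzero `v` the span of all `W_{j_n} ⋯ W_{j_1} v` is everything. -/
def IrredKraus {d : ℕ} {J : Type*} (W : J → Md d) : Prop :=
  ∀ v : Fin d → ℂ, v ≠ 0 →
    Submodule.span ℂ {u : Fin d → ℂ | ∃ l : List J, u = ((l.map W).prod).mulVec v} = ⊤

/-- The operator `V_{i_n} ⋯ V_{i_1}` associated with a measurement trajectory. -/
def trajOp {d : ℕ} {I : Type*} (V : I → Md d) {n : ℕ} (ω : Fin n → I) : Md d :=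
  ((List.ofFn fun k => V (ω k)).reverse).prod

/-- The probability `tr(V_{i_n} ⋯ V_{i_1} ρ V_{i_1}* ⋯ V_{i_n}*)` of a trajectory. -/
def trajProb {d : ℕ} {I : Type*} (V : I → Md d) (ρ : Md d) {n : ℕ} (ω : Fin n → I) : ℝ :=
  ((trajOp V ω) * ρ * (trajOp V ω)ᴴ).trace.re

/-- The function `h(x) = 1/(√(1+x) + x/2 + 1)` from the Bernstein bound. -/
def hfun (x : ℝ) : ℝ := (Real.sqrt (1 + x) + x / 2 + 1)⁻¹

/-- The norm `‖(Id - Φ)^{-1}|_F‖_∞` of the inverse of `Id - Φ` on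
`F = {x : tr(σ x) = 0}`, with respect to the spectral norm. -/
def pseudoResNorm {d : ℕ} {I : Type*} [Fintype I] (V : I → Md d) (σ : Md d) : ℝ :=
  sInf {C : ℝ | 0 ≤ C ∧ ∀ x : Md d, (σ * x).trace = 0 →
    specNorm x ≤ C * specNorm (x - channel V x)}

/-- The deformed map `Φ^{(k)}(x) = Σ_i f(i)^k V_i* x V_i`. -/
def phiK {d : ℕ} {I : Type*} [Fintype I] (V : I → Md d) (f : I → ℝ) (k : ℕ)
    (x : Md d) : Md d :=
  ∑ i, ((f i : ℂ) ^ k) • ((V i)ᴴ * x * V i)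

/-- The KMS adjoint `Φ^{(k)†}` of `Φ^{(k)}`, where `s = σ^{1/2}`. -/
def phiKDag {d : ℕ} {I : Type*} [Fintype I] (V : I → Md d) (f : I → ℝ) (s : Md d) (k : ℕ)
    (x : Md d) : Md d :=
  s⁻¹ * (∑ i, ((f i : ℂ) ^ k) • (V i * (s * x * s) * (V i)ᴴ)) * s⁻¹

/-- The map `Ψ^{(m)} = Σ_{l=0}^m binom(m,l) Φ^{(l)†} ∘ Φ^{(m−l)}`. -/
def psiM {d : ℕ} {I : Type*} [Fintype I] (V : I → Md d) (f : I → ℝ) (s : Md d) (m : ℕ)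
    (x : Md d) : Md d :=
  ∑ l ∈ Finset.range (m + 1), (m.choose l : ℂ) • phiKDag V f s l (phiK V f (m - l) x)

section
variable {d : ℕ}

theorem sqrtm_eq_cfc (σ : Md d) (hσ : σ.PosDef) : sqrtm σ hσ = cfc Real.sqrt σ := by
  rw [hσ.posSemidef.1.cfc_eq]; rfl

theorem conjTranspose_sqrtm (σ : Md d) (hσ : σ.PosDef) : (sqrtm σ hσ)ᴴ = sqrtm σ hσ := by
  rw [sqrtm_eq_cfc]
  exact (cfc_predicate Real.sqrt σ : IsSelfAdjoint _)

open scoped MatrixOrder in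
theorem sqrtm_mul_self (σ : Md d) (hσ : σ.PosDef) : sqrtm σ hσ * sqrtm σ hσ = σ := by
  have h0 : 0 ≤ σ := hσ.posSemidef.nonneg
  rw [sqrtm_eq_cfc, ← cfc_mul Real.sqrt Real.sqrt σ]
  conv_rhs => rw [← cfc_id' ℝ σ]
  exact cfc_congr fun x hx => Real.mul_self_sqrt (spectrum_nonneg_of_nonneg h0 hx)

theorem isUnit_sqrtm (σ : Md d) (hσ : σ.PosDef) : IsUnit (sqrtm σ hσ) :=
  isUnit_of_mul_isUnit_left ((sqrtm_mul_self σ hσ).symm ▸ hσ.isUnit)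

end

theorem sum_mul_mul_le_of_abs_le {ι : Type*} [Fintype ι] {G : ι → ι → ℝ}
    (hG : ∀ p q, 0 ≤ G p q) (hGsymm : ∀ p q, G p q = G q p) {g w : ι → ℝ}
    (hgw : ∀ p, |g p| ≤ w p) :
    ∑ p, ∑ q, g p * g q * G p q ≤ ∑ p, w p ^ 2 * ∑ q, G p q := by
  have hpt : ∀ p q, g p * g q * G p q ≤ (w p ^ 2 * G p q + w q ^ 2 * G q p) / 2 := by
    intro p q
    have hgg : g p * g q ≤ (w p ^ 2 + w q ^ 2) / 2 := by
      nlinarith [abs_nonneg (g p), abs_nonneg (g q), hgw p, hgw q, sq_nonneg (w p - w q),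
        le_abs_self (g p * g q), abs_mul (g p) (g q)]
    rw [← hGsymm p q]
    nlinarith [hG p q]
  calc ∑ p, ∑ q, g p * g q * G p q
      ≤ ∑ p, ∑ q, (w p ^ 2 * G p q + w q ^ 2 * G q p) / 2 :=
        sum_le_sum fun p _ => sum_le_sum fun q _ => hpt p q
    _ = ∑ p, w p ^ 2 * ∑ q, G p q := by
        simp only [add_div, sum_add_distrib]
        rw [sum_comm (f := fun p q => w q ^ 2 * G q p / 2)]
        simp only [← sum_div, mul_sum]
        ring

theorem sum_sq_add_mul_le {I : Type*} [Fintype I] {r : I → I → ℝ} (hr : ∀ i j, 0 ≤ r i j)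
    (hrsymm : ∀ i j, r i j = r j i) (f : I → ℝ) :
    ∑ i, ∑ j, (f i + f j) ^ 2 * r i j ≤ 4 * ∑ i, f i ^ 2 * ∑ j, r i j := by
  have hcol : ∑ i, ∑ j, f j ^ 2 * r i j = ∑ i, f i ^ 2 * ∑ j, r i j := by
    rw [sum_comm]
    exact sum_congr rfl fun j _ => by rw [mul_sum]; exact sum_congr rfl fun i _ => by rw [hrsymm]
  calc ∑ i, ∑ j, (f i + f j) ^ 2 * r i j
      ≤ ∑ i, ∑ j, (2 * (f i ^ 2 * r i j) + 2 * (f j ^ 2 * r i j)) :=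
        sum_le_sum fun i _ => sum_le_sum fun j _ => by nlinarith [hr i j, sq_nonneg (f i - f j)]
    _ = 4 * ∑ i, f i ^ 2 * ∑ j, r i j := by
        simp only [sum_add_distrib, ← mul_sum, hcol]
        ring

theorem abs_pow_le_pow_pred_mul_abs {x a : ℝ} (hx : |x| ≤ a) {m : ℕ} (hm : 1 ≤ m) :
    |x ^ m| ≤ a ^ (m - 1) * |x| := by
  obtain ⟨n, rfl⟩ := Nat.exists_eq_add_of_le' hm
  rw [abs_pow, pow_succ, Nat.add_sub_cancel]
  exact mul_le_mul_of_nonneg_right (pow_le_pow_left₀ (abs_nonneg x) hx n) (abs_nonneg x)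

section KMS
variable {d : ℕ} {ι : Type*} [Fintype ι]

theorem trace_conjTranspose_mul_self_re_nonneg (E : Md d) : 0 ≤ (Eᴴ * E).trace.re :=
  (Complex.nonneg_iff.mp (posSemidef_conjTranspose_mul_self E).trace_nonneg).1

theorem trace_mul_conjTranspose_self_re_nonneg (E : Md d) : 0 ≤ (E * Eᴴ).trace.re := by
  rw [trace_mul_comm]
  exact trace_conjTranspose_mul_self_re_nonneg E

theorem trace_kms_comm (s A B : Md d) : (s * A * s * B).trace = (s * B * s * A).trace := by
  rw [Matrix.mul_assoc (s * A), trace_mul_comm, ← Matrix.mul_assoc]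

theorem trace_kms_sum_smul_re (s : Md d) {A : ι → Md d} (hA : ∀ p, (A p)ᴴ = A p) (g : ι → ℝ) :
    (s * (∑ p, (g p : ℂ) • A p)ᴴ * s * ∑ p, (g p : ℂ) • A p).trace.re =
      ∑ p, ∑ q, g p * g q * (s * A p * s * A q).trace.re := by
  simp only [conjTranspose_sum, conjTranspose_smul, hA, Complex.star_def, Complex.conj_ofReal,
    mul_sum, sum_mul, Matrix.mul_smul, Matrix.smul_mul, smul_smul, trace_sum, trace_smul,
    smul_eq_mul, Complex.re_sum, ← Complex.ofReal_mul, Complex.re_ofReal_mul]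
  exact sum_congr rfl fun p _ => sum_congr rfl fun q _ => by rw [trace_kms_comm]

theorem trace_kms_mul_conjTranspose_re_nonneg {s : Md d} (hs : sᴴ = s) (C D : Md d) :
    0 ≤ (s * (C * Cᴴ) * s * (D * Dᴴ)).trace.re := by
  have h : Dᴴ * (s * (C * Cᴴ) * s * D) = (Cᴴ * s * D)ᴴ * (Cᴴ * s * D) := by
    simp only [conjTranspose_mul, conjTranspose_conjTranspose, hs, Matrix.mul_assoc]
  rw [← Matrix.mul_assoc, trace_mul_comm, h]
  exact trace_conjTranspose_mul_self_re_nonneg _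

theorem trace_kms_sum_smul_le {s : Md d} (hs : sᴴ = s) {C : ι → Md d}
    (hC : ∑ p, C p * (C p)ᴴ = 1) {g w : ι → ℝ} (hgw : ∀ p, |g p| ≤ w p) :
    (s * (∑ p, (g p : ℂ) • (C p * (C p)ᴴ))ᴴ * s * ∑ p, (g p : ℂ) • (C p * (C p)ᴴ)).trace.re ≤
      ∑ p, w p ^ 2 * (s * (C p * (C p)ᴴ) * s).trace.re := by
  rw [trace_kms_sum_smul_re s (fun p => by rw [conjTranspose_mul, conjTranspose_conjTranspose])]
  refine (sum_mul_mul_le_of_abs_le (fun p q => trace_kms_mul_conjTranspose_re_nonneg hs _ _)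
    (fun p q => by rw [trace_kms_comm]) hgw).trans_eq (sum_congr rfl fun p _ => ?_)
  rw [← Complex.re_sum, ← trace_sum, ← mul_sum, hC, Matrix.mul_one]

end KMS

section Channel
variable {d : ℕ} {I : Type*}

def crossKraus (V : I → Md d) (s : Md d) (p : I × I) : Md d :=
  V p.1 * s * (V p.2)ᴴ

def adjCompKraus (V : I → Md d) (s : Md d) (p : I × I) : Md d :=
  s⁻¹ * crossKraus V s p

theorem conjTranspose_crossKraus {s : Md d} (hs : sᴴ = s) (V : I → Md d) (p : I × I) :
    (crossKraus V s p)ᴴ = crossKraus V s p.swap := by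
  simp only [crossKraus, conjTranspose_mul, conjTranspose_conjTranspose, hs, Prod.fst_swap,
    Prod.snd_swap, Matrix.mul_assoc]

theorem adjCompKraus_mul_conjTranspose {s : Md d} (hs : sᴴ = s) (V : I → Md d) (p : I × I) :
    adjCompKraus V s p * (adjCompKraus V s p)ᴴ =
      s⁻¹ * (V p.1 * (s * ((V p.2)ᴴ * V p.2) * s) * (V p.1)ᴴ) * s⁻¹ := by
  simp only [adjCompKraus, crossKraus, conjTranspose_mul, conjTranspose_conjTranspose,
    conjTranspose_nonsing_inv, hs, Matrix.mul_assoc]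

theorem kms_adjCompKraus_mul_conjTranspose {s : Md d} (hs : sᴴ = s) (hu : IsUnit s)
    (V : I → Md d) (p : I × I) :
    s * (adjCompKraus V s p * (adjCompKraus V s p)ᴴ) * s =
      crossKraus V s p * (crossKraus V s p)ᴴ := by
  have hsC : s * adjCompKraus V s p = crossKraus V s p :=
    mul_nonsing_inv_cancel_left _ _ ((isUnit_iff_isUnit_det s).mp hu)
  rw [← hsC, conjTranspose_mul, hs]
  simp only [Matrix.mul_assoc]

theorem psiM_one_eq_sum [Fintype I] {s : Md d} (hs : sᴴ = s) (V : I → Md d) (f : I → ℝ)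
    (m : ℕ) :
    psiM V f s m 1 =
      ∑ p, (((f p.1 + f p.2) ^ m : ℝ) : ℂ) • (adjCompKraus V s p * (adjCompKraus V s p)ᴴ) := by
  simp only [adjCompKraus_mul_conjTranspose hs, Fintype.sum_prod_type, psiM, phiKDag, phiK,
    Matrix.mul_one, mul_sum, sum_mul, smul_sum, Matrix.mul_smul, Matrix.smul_mul, smul_smul,
    Matrix.mul_assoc]
  rw [sum_comm]
  refine sum_congr rfl fun i _ => ?_
  rw [sum_comm]
  refine sum_congr rfl fun j _ => ?_
  rw [← sum_smul, Complex.ofReal_pow, Complex.ofReal_add, add_pow]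
  congr 1
  exact sum_congr rfl fun l _ => by ring

section Invariant
variable [Fintype I] {V : I → Md d} (hV : ∑ i, (V i)ᴴ * V i = 1) {σ s : Md d} (hs : sᴴ = s)
  (hss : s * s = σ)
include hV hs hss

theorem sum_adjCompKraus_mul_conjTranspose (hinv : channelDual V σ = σ) (hu : IsUnit s) :
    ∑ p, adjCompKraus V s p * (adjCompKraus V s p)ᴴ = 1 := by
  have hrow : ∀ i, ∑ j, V i * (s * ((V j)ᴴ * V j) * s) * (V i)ᴴ = V i * σ * (V i)ᴴ := fun i => by
    rw [← sum_mul, ← mul_sum, ← sum_mul, ← mul_sum, hV, Matrix.mul_one, hss]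
  simp only [adjCompKraus_mul_conjTranspose hs, Fintype.sum_prod_type, ← sum_mul, ← mul_sum,
    hrow]
  have hdet := (isUnit_iff_isUnit_det s).mp hu
  rw [← channelDual, hinv, ← hss, ← Matrix.mul_assoc, nonsing_inv_mul s hdet, Matrix.one_mul,
    mul_nonsing_inv s hdet]

theorem sum_trace_crossKraus_mul_conjTranspose (i : I) :
    ∑ j, (crossKraus V s (i, j) * (crossKraus V s (i, j))ᴴ).trace =
      (σ * ((V i)ᴴ * V i)).trace := by
  have h : ∀ j, crossKraus V s (i, j) * (crossKraus V s (i, j))ᴴ =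
      V i * s * ((V j)ᴴ * V j) * (s * (V i)ᴴ) := fun j => by
    simp only [crossKraus, conjTranspose_mul, conjTranspose_conjTranspose, hs, Matrix.mul_assoc]
  rw [← trace_sum]
  simp only [h, ← sum_mul, ← mul_sum, hV, Matrix.mul_one]
  rw [Matrix.mul_assoc, ← Matrix.mul_assoc s, hss, trace_mul_comm, Matrix.mul_assoc]

theorem sum_sq_add_mul_trace_crossKraus_le (f : I → ℝ) :
    ∑ i, ∑ j, (f i + f j) ^ 2 *
        (crossKraus V s (i, j) * (crossKraus V s (i, j))ᴴ).trace.re ≤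
      4 * ∑ i, f i ^ 2 * (σ * ((V i)ᴴ * V i)).trace.re := by
  refine (sum_sq_add_mul_le (fun _ _ => trace_mul_conjTranspose_self_re_nonneg _)
    (fun i j => ?_) f).trans_eq ?_
  · have hij : (crossKraus V s (i, j))ᴴ = crossKraus V s (j, i) := conjTranspose_crossKraus hs V _
    have hji : (crossKraus V s (j, i))ᴴ = crossKraus V s (i, j) := conjTranspose_crossKraus hs V _
    rw [trace_mul_comm, hij, hji]
  · congr 1
    exact sum_congr rfl fun i _ => by
      rw [← sum_trace_crossKraus_mul_conjTranspose hV hs hss i, Complex.re_sum]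

end Invariant

end Channel

theorem lemma31_part4_general
    {d : ℕ} {I : Type*} [Fintype I]
    (V : I → Md d) (hV : ∑ i, (V i)ᴴ * V i = 1)
    (σ : Md d) (hσ : σ.PosDef)
    (hinv : channelDual V σ = σ)
    (f : I → ℝ) (b c : ℝ) (hb : 0 ≤ b)
    -- max_i |f(i)| = c
    (hbdd : ∀ i, |f i| ≤ c) (hatt : ∃ i, |f i| = c)
    -- π(f²) = b²
    (hvar : ∑ i, (f i) ^ 2 * ((σ * ((V i)ᴴ * V i)).trace).re = b ^ 2)
    (m : ℕ) (hm : 1 ≤ m) :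
    kmsNorm (sqrtm σ hσ) (psiM V f (sqrtm σ hσ) m 1) ≤ 2 * (2 * c) ^ (m - 1) * b := by
  set s := sqrtm σ hσ
  have hs : sᴴ = s := conjTranspose_sqrtm σ hσ
  have hss : s * s = σ := sqrtm_mul_self σ hσ
  have hc : 0 ≤ c := by
    obtain ⟨i, hi⟩ := hatt
    exact hi ▸ abs_nonneg _
  set K := (2 * c) ^ (m - 1)
  have hgw : ∀ p : I × I, |(f p.1 + f p.2) ^ m| ≤ K * |f p.1 + f p.2| := fun p =>
    abs_pow_le_pow_pred_mul_abs ((abs_add_le _ _).trans (by linarith [hbdd p.1, hbdd p.2])) hm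
  have hweights : ∑ p : I × I, (K * |f p.1 + f p.2|) ^ 2 *
      (s * (adjCompKraus V s p * (adjCompKraus V s p)ᴴ) * s).trace.re =
      K ^ 2 * ∑ i, ∑ j, (f i + f j) ^ 2 *
        (crossKraus V s (i, j) * (crossKraus V s (i, j))ᴴ).trace.re := by
    simp only [kms_adjCompKraus_mul_conjTranspose hs (isUnit_sqrtm σ hσ), mul_pow, sq_abs,
      mul_assoc, mul_sum, Fintype.sum_prod_type]
  rw [kmsNorm, Real.sqrt_le_left (by positivity), psiM_one_eq_sum hs]
  calc _ ≤ _ := trace_kms_sum_smul_le hs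
          (sum_adjCompKraus_mul_conjTranspose hV hs hss hinv (isUnit_sqrtm σ hσ)) hgw
    _ = _ := hweights
    _ ≤ K ^ 2 * (4 * b ^ 2) := by
        rw [← hvar]
        exact mul_le_mul_of_nonneg_left (sum_sq_add_mul_trace_crossKraus_le hV hs hss f)
          (sq_nonneg K)
    _ = (2 * K * b) ^ 2 := by ring

/-- **Lemma 3.1 part 4**: for `m ≥ 1`, `‖Ψ^{(m)}(1)‖₂ ≤ 2 (2c)^{m−1} b`. -/
theorem lemma31_part4
    {d : ℕ} (hd : 1 ≤ d) {I : Type*} [Fintype I] [Nonempty I]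
    (V : I → Md d) (hV : ∑ i, (V i)ᴴ * V i = 1)
    (σ : Md d) (hσ : σ.PosDef) (hσtr : σ.trace = 1)
    (hinv : channelDual V σ = σ)
    (f : I → ℝ) (b c : ℝ) (hb : 0 ≤ b)
    -- max_i |f(i)| = c
    (hbdd : ∀ i, |f i| ≤ c) (hatt : ∃ i, |f i| = c)
    -- π(f²) = b²
    (hvar : ∑ i, (f i) ^ 2 * ((σ * ((V i)ᴴ * V i)).trace).re = b ^ 2)
    (m : ℕ) (hm : 1 ≤ m) :
    kmsNorm (sqrtm σ hσ) (psiM V f (sqrtm σ hσ) m 1) ≤ 2 * (2 * c) ^ (m - 1) * b :=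
  lemma31_part4_general V hV σ hσ hinv f b c hb hbdd hatt hvar m hm
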